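/- Let Φ : ℝ² → ℝ be C² in variables (a,b) with Φ_{ab} = −Φ/4, and let r = (r¹,r²,r³) be a C¹ solution of the diagonalized drift flux system (S) on an open set U ⊆ ℝ². Then, evaluating Φ and its derivatives at (r¹(t,x), r²(t,x)): ∂_t(e^{(r¹−r²)/2}(2Φ_a + Φ)) + ∂_x(e^{(r¹−r²)/2}(2(r¹+r²+1)Φ_a + (r¹+r²−1)Φ)) = 0 on U. -/

import Mathlib

/- STATEMENT 14: the second family of conserved currents of (S),
parameterized by solutions Φ of the Klein–Gordon equation Φ_{ab} = −Φ/4. -/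

noncomputable section

/-- Partial derivative with respect to the first ("time") variable. -/
def pt (f : ℝ × ℝ → ℝ) (p : ℝ × ℝ) : ℝ := fderiv ℝ f p (1, 0)

/-- Partial derivative with respect to the second ("space") variable. -/
def px (f : ℝ × ℝ → ℝ) (p : ℝ × ℝ) : ℝ := fderiv ℝ f p (0, 1)

/-- Partial derivative with respect to the first argument (a). -/
def pa (f : ℝ × ℝ → ℝ) (q : ℝ × ℝ) : ℝ := fderiv ℝ f q (1, 0)

/-- Partial derivative with respect to the second argument (b). -/
def pb (f : ℝ × ℝ → ℝ) (q : ℝ × ℝ) : ℝ := fderiv ℝ f q (0, 1)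

lemma clm_eval (L : ℝ × ℝ →L[ℝ] ℝ) (a b : ℝ) :
    L (a, b) = a * L (1, 0) + b * L (0, 1) := by
  have h : (a, b) = a • ((1:ℝ), (0:ℝ)) + b • ((0:ℝ), (1:ℝ)) := by
    simp [Prod.ext_iff]
  rw [h, map_add, map_smul, map_smul, smul_eq_mul, smul_eq_mul]

theorem second_family_conserved_currents
    (Φ : ℝ × ℝ → ℝ) (hΦ : ContDiff ℝ 2 Φ)
    (hKG : ∀ q : ℝ × ℝ, pb (pa Φ) q = -Φ q / 4)
    (U : Set (ℝ × ℝ)) (hU : IsOpen U)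
    (r₁ r₂ r₃ : ℝ × ℝ → ℝ)
    (hr₁ : ContDiffOn ℝ 1 r₁ U) (hr₂ : ContDiffOn ℝ 1 r₂ U)
    (hr₃ : ContDiffOn ℝ 1 r₃ U)
    (hS₁ : ∀ p ∈ U, pt r₁ p + (r₁ p + r₂ p + 1) * px r₁ p = 0)
    (hS₂ : ∀ p ∈ U, pt r₂ p + (r₁ p + r₂ p - 1) * px r₂ p = 0)
    (hS₃ : ∀ p ∈ U, pt r₃ p + (r₁ p + r₂ p) * px r₃ p = 0) :
    ∀ p ∈ U,
      pt (fun q => Real.exp ((r₁ q - r₂ q) / 2) *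
            (2 * pa Φ (r₁ q, r₂ q) + Φ (r₁ q, r₂ q))) p
        + px (fun q => Real.exp ((r₁ q - r₂ q) / 2) *
            (2 * (r₁ q + r₂ q + 1) * pa Φ (r₁ q, r₂ q)
              + (r₁ q + r₂ q - 1) * Φ (r₁ q, r₂ q))) p = 0 := by
  intro p hp
  have hmem : U ∈ nhds p := hU.mem_nhds hp
  have hu : DifferentiableAt ℝ r₁ p :=
    ((hr₁.differentiableOn one_ne_zero).differentiableAt hmem)
  have hv : DifferentiableAt ℝ r₂ p :=
    ((hr₂.differentiableOn one_ne_zero).differentiableAt hmem)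
  set Du := fderiv ℝ r₁ p with hDu
  set Dv := fderiv ℝ r₂ p with hDv
  have hu' : HasFDerivAt r₁ Du p := hu.hasFDerivAt
  have hv' : HasFDerivAt r₂ Dv p := hv.hasFDerivAt
  set q : ℝ × ℝ := (r₁ p, r₂ p) with hq
  have hg : HasFDerivAt (fun y => (r₁ y, r₂ y)) (Du.prod Dv) p := hu'.prodMk hv'
  have hΦd : DifferentiableAt ℝ Φ q := (hΦ.differentiable (by norm_num)).differentiableAt
  set DF := fderiv ℝ Φ q with hDF
  have hF : HasFDerivAt Φ DF q := hΦd.hasFDerivAt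
  have hpa : ContDiff ℝ 1 (pa Φ) := by
    have h1 : ContDiff ℝ 1 (fderiv ℝ Φ) := hΦ.fderiv_right (by norm_num)
    exact (ContinuousLinearMap.apply ℝ ℝ ((1:ℝ), (0:ℝ))).contDiff.comp h1
  set DA := fderiv ℝ (pa Φ) q with hDA
  have hA : HasFDerivAt (pa Φ) DA q := ((hpa.differentiable one_ne_zero) q).hasFDerivAt
  have hFg : HasFDerivAt (fun y => Φ (r₁ y, r₂ y)) (DF.comp (Du.prod Dv)) p :=
    hF.comp p hg
  have hAg : HasFDerivAt (fun y => pa Φ (r₁ y, r₂ y)) (DA.comp (Du.prod Dv)) p :=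
    by have := hA.comp p hg; exact this
  have hs : HasFDerivAt (fun y => (r₁ y - r₂ y) / 2) ((2:ℝ)⁻¹ • (Du - Dv)) p :=
    (hu'.sub hv').mul_const ((2:ℝ)⁻¹)
  have hE : HasFDerivAt (fun y => Real.exp ((r₁ y - r₂ y) / 2))
      (Real.exp ((r₁ p - r₂ p) / 2) • ((2:ℝ)⁻¹ • (Du - Dv))) p := hs.exp
  -- the density
  have hT1 : HasFDerivAt (fun y => 2 * pa Φ (r₁ y, r₂ y) + Φ (r₁ y, r₂ y))
      ((2:ℝ) • (DA.comp (Du.prod Dv)) + DF.comp (Du.prod Dv)) p :=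
    (hAg.const_mul 2).add hFg
  have hT : HasFDerivAt (fun q => Real.exp ((r₁ q - r₂ q) / 2) *
        (2 * pa Φ (r₁ q, r₂ q) + Φ (r₁ q, r₂ q)))
      (Real.exp ((r₁ p - r₂ p) / 2) •
          ((2:ℝ) • (DA.comp (Du.prod Dv)) + DF.comp (Du.prod Dv))
        + (2 * pa Φ q + Φ q) •
          (Real.exp ((r₁ p - r₂ p) / 2) • ((2:ℝ)⁻¹ • (Du - Dv)))) p :=
    hE.mul hT1
  -- the flux
  have hc1 : HasFDerivAt (fun y => 2 * (r₁ y + r₂ y + 1))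
      ((2:ℝ) • (Du + Dv)) p := ((hu'.add hv').add_const 1).const_mul 2
  have hc2 : HasFDerivAt (fun y => r₁ y + r₂ y - 1) (Du + Dv) p :=
    (hu'.add hv').sub_const 1
  have hX1 : HasFDerivAt
      (fun y => 2 * (r₁ y + r₂ y + 1) * pa Φ (r₁ y, r₂ y)
        + (r₁ y + r₂ y - 1) * Φ (r₁ y, r₂ y))
      ((2 * (r₁ p + r₂ p + 1)) • (DA.comp (Du.prod Dv))
          + pa Φ q • ((2:ℝ) • (Du + Dv))
        + ((r₁ p + r₂ p - 1) • (DF.comp (Du.prod Dv)) + Φ q • (Du + Dv))) p :=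
    (hc1.mul hAg).add (hc2.mul hFg)
  have hX : HasFDerivAt (fun q => Real.exp ((r₁ q - r₂ q) / 2) *
        (2 * (r₁ q + r₂ q + 1) * pa Φ (r₁ q, r₂ q)
          + (r₁ q + r₂ q - 1) * Φ (r₁ q, r₂ q)))
      (Real.exp ((r₁ p - r₂ p) / 2) •
          ((2 * (r₁ p + r₂ p + 1)) • (DA.comp (Du.prod Dv))
              + pa Φ q • ((2:ℝ) • (Du + Dv))
            + ((r₁ p + r₂ p - 1) • (DF.comp (Du.prod Dv)) + Φ q • (Du + Dv)))
        + (2 * (r₁ p + r₂ p + 1) * pa Φ q + (r₁ p + r₂ p - 1) * Φ q) •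
          (Real.exp ((r₁ p - r₂ p) / 2) • ((2:ℝ)⁻¹ • (Du - Dv)))) p :=
    hE.mul hX1
  -- the system at p
  have h1 : Du (1, 0) = -((r₁ p + r₂ p + 1) * Du (0, 1)) := by
    have h := hS₁ p hp
    unfold pt px at h
    rw [← hDu] at h
    linarith
  have h2 : Dv (1, 0) = -((r₁ p + r₂ p - 1) * Dv (0, 1)) := by
    have h := hS₂ p hp
    unfold pt px at h
    rw [← hDv] at h
    linarith
  -- Klein-Gordon
  have hKGq : DA (0, 1) = -Φ q / 4 := hKG q
  have hpaq : pa Φ q = DF (1, 0) := rfl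
  -- put everything together
  unfold pt px
  rw [hT.fderiv, hX.fderiv]
  simp only [ContinuousLinearMap.add_apply, ContinuousLinearMap.coe_smul',
    Pi.smul_apply, ContinuousLinearMap.comp_apply, ContinuousLinearMap.prod_apply,
    ContinuousLinearMap.coe_sub', Pi.sub_apply, smul_eq_mul]
  rw [clm_eval DA (Du (1, 0)) (Dv (1, 0)), clm_eval DA (Du (0, 1)) (Dv (0, 1)),
    clm_eval DF (Du (1, 0)) (Dv (1, 0)), clm_eval DF (Du (0, 1)) (Dv (0, 1)),
    hKGq, hpaq, h1, h2]
  ring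

end
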